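/- For every real-valued f ∈ C¹([0,1]) and every integer n ≥ 1, the n-th iterate U^n f is differentiable on [0,1] and (U^n f)′(x) = (−1)^n V^n(f′)(x) for all x ∈ [0,1]. -/

import Mathlib

open MeasureTheory Set Filter Topology

/-- The kernel P_{N,i}(x) = (x+N-1)/((x+i)(x+i-1)). -/
noncomputable def PNi (N i : ℕ) (x : ℝ) : ℝ :=
  (x + N - 1) / ((x + i) * (x + i - 1))

/-- The inverse branches u_{N,i}(x) = 1 - N/(x+i). -/
noncomputable def uNi (N i : ℕ) (x : ℝ) : ℝ := 1 - (N : ℝ) / (x + i)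

/-- The Perron–Frobenius operator U of R_N under ρ_N:
`U f(x) = Σ_{i ≥ N} P_{N,i}(x) f(u_{N,i}(x))`, indexed by i = N + k. -/
noncomputable def U (N : ℕ) (f : ℝ → ℝ) (x : ℝ) : ℝ :=
  ∑' k : ℕ, PNi N (N + k) x * f (uNi N (N + k) x)

/-- The operator V with (Uf)' = -V f':
`V g(x) = -Σ_{i ≥ N} [ (i+1-N)/(x+i)² ∫_{u_{N,i}(x)}^{u_{N,i+1}(x)} g
          + N(x+N-1)/((x+i-1)(x+i)³) g(u_{N,i}(x)) ]`, indexed by i = N + k. -/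
noncomputable def V (N : ℕ) (g : ℝ → ℝ) (x : ℝ) : ℝ :=
  -∑' k : ℕ,
    ((((N + k : ℕ) : ℝ) + 1 - N) / (x + ((N + k : ℕ) : ℝ)) ^ 2
        * (∫ u in (uNi N (N + k) x)..(uNi N (N + k + 1) x), g u)
      + ((N : ℝ) * (x + N - 1)) / ((x + ((N + k : ℕ) : ℝ) - 1) * (x + ((N + k : ℕ) : ℝ)) ^ 3)
        * g (uNi N (N + k) x))

/-!
Write `P_k = P_{N,N+k}` and `u_k = u_{N,N+k}`.
Differentiating the series `U F = Σ_k P_k · F ∘ u_k` term by term is legitimate near `[0, 1]`,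
because the derivatives `P_k' · F ∘ u_k + P_k u_k' · F' ∘ u_k` are `O(k⁻²)` uniformly in `x`.
Since `P_k' = k / (x+N+k-1)² - (k+1) / (x+N+k)²` and `F(u_{k+1}) - F(u_k) = ∫ F'` over
`[u_k, u_{k+1}]`, the summands of `-V F'` and of `(U F)'` differ by the differences
`c_{k+1} - c_k` of `c_k = k / (x+N+k-1)² · F(u_k)`; as `c_0 = 0` and `c_k → 0` this telescoping
series vanishes (Abel summation), so `(U F)' = -V F'`, and `V F'` is again continuous.
Induction on `n` finishes the proof. Functions given on `[0, 1]` are first extended to `C¹`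
functions on `ℝ`; this changes neither `U f` nor `V f'` on `[0, 1]`, as every `u_{N,i}` maps
`[0, 1]` into itself.
-/

theorem tsum_sub_eq_of_tendsto {G : Type*} [AddCommGroup G] [TopologicalSpace G]
    [IsTopologicalAddGroup G] [T2Space G] {c : ℕ → G} {l : G}
    (hs : Summable fun k => c (k + 1) - c k) (hc : Tendsto c atTop (𝓝 l)) :
    ∑' k, (c (k + 1) - c k) = l - c 0 := by
  refine tendsto_nhds_unique ?_ (hc.sub_const (c 0))
  simpa only [Finset.sum_range_sub] using hs.hasSum.tendsto_sum_nat

theorem exists_hasDerivAt_eqOn_Icc {a b : ℝ} (hab : a ≤ b) {f f' : ℝ → ℝ}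
    (hf : ∀ x ∈ Icc a b, HasDerivWithinAt f (f' x) (Icc a b) x)
    (hf' : ContinuousOn f' (Icc a b)) :
    ∃ F F' : ℝ → ℝ, (∀ x, HasDerivAt F (F' x) x) ∧ Continuous F' ∧
      EqOn F f (Icc a b) ∧ EqOn F' f' (Icc a b) := by
  set F' := IccExtend hab ((Icc a b).domRestrict f')
  have hF'c : Continuous F' := continuous_IccExtend_iff.2 hf'.domRestrict
  have hF'eq : EqOn F' f' (Icc a b) := fun x hx => IccExtend_of_mem _ _ hx
  have hF : ∀ x, HasDerivAt (fun x => f a + ∫ t in a..x, F' t) (F' x) x := fun x =>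
    ((hF'c.integral_hasStrictDerivAt a x).hasDerivAt).const_add (f a)
  refine ⟨_, F', hF, hF'c, fun y hy => ?_, hF'eq⟩
  refine eq_of_has_deriv_right_eq (f' := F') (fun x _ => (hF x).hasDerivWithinAt)
    (fun x hx => ?_) (fun x _ => (hF x).continuousAt.continuousWithinAt)
    (fun x hx => (hf x hx).continuousWithinAt) (by simp) y hy
  rw [hF'eq (Ico_subset_Icc_self hx)]
  exact (hf x (Ico_subset_Icc_self hx)).mono_of_mem_nhdsWithin (Icc_mem_nhdsGE_of_mem hx)

lemma summable_div_add_one_sq (C : ℝ) : Summable fun k : ℕ => C / ((k : ℝ) + 1) ^ 2 := by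
  have h := (summable_nat_add_iff 1).2 (Real.summable_one_div_nat_pow.2 one_lt_two)
  simpa [div_eq_mul_inv] using h.mul_left C

noncomputable def derivPNi (N k : ℕ) (x : ℝ) : ℝ :=
  (k * (k + 1) - (x + N - 1) ^ 2) / ((x + N + k) * (x + N + k - 1)) ^ 2

noncomputable def derivUNi (N k : ℕ) (x : ℝ) : ℝ := N / (x + N + k) ^ 2

noncomputable def termDeriv (N k : ℕ) (F F' : ℝ → ℝ) (x : ℝ) : ℝ :=
  derivPNi N k x * F (uNi N (N + k) x) + PNi N (N + k) x * derivUNi N k x * F' (uNi N (N + k) x)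

noncomputable def Vsummand (N : ℕ) (g : ℝ → ℝ) (x : ℝ) (k : ℕ) : ℝ :=
  (((N + k : ℕ) : ℝ) + 1 - N) / (x + ((N + k : ℕ) : ℝ)) ^ 2
      * (∫ u in (uNi N (N + k) x)..(uNi N (N + k + 1) x), g u)
    + ((N : ℝ) * (x + N - 1)) / ((x + ((N + k : ℕ) : ℝ) - 1) * (x + ((N + k : ℕ) : ℝ)) ^ 3)
      * g (uNi N (N + k) x)

noncomputable def abelTerm (N : ℕ) (F : ℝ → ℝ) (x : ℝ) (k : ℕ) : ℝ :=
  k / (x + N + k - 1) ^ 2 * F (uNi N (N + k) x)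

section Identities

variable {N k : ℕ} {x : ℝ}

lemma uNi_add (N k : ℕ) : uNi N (N + k) = fun x : ℝ => 1 - N * (x + N + k)⁻¹ := by
  ext x; simp only [uNi]; push_cast; ring

lemma PNi_add (N k : ℕ) :
    PNi N (N + k) = fun x : ℝ => (x + N - 1) / ((x + N + k) * (x + N + k - 1)) := by
  ext x; simp only [PNi]; push_cast; ring_nf

lemma hasDerivAt_uNi (hx : x + N + k ≠ 0) :
    HasDerivAt (uNi N (N + k)) (derivUNi N k x) x := by
  rw [uNi_add]
  refine ((((hasDerivAt_id' x).add_const _).add_const _).inv hx).const_mul _ |>.const_sub _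
    |>.congr_deriv ?_
  simp only [derivUNi]; ring

lemma hasDerivAt_PNi (hx : x + N + k ≠ 0) (hx₁ : x + N + k - 1 ≠ 0) :
    HasDerivAt (PNi N (N + k)) (derivPNi N k x) x := by
  have hy := ((hasDerivAt_id' x).add_const (N : ℝ)).add_const (k : ℝ)
  have hden : HasDerivAt (fun y : ℝ => (y + N + k) * (y + N + k - 1)) _ x :=
    hy.mul (hy.sub_const 1)
  rw [PNi_add]
  refine (((hasDerivAt_id' x).add_const _).sub_const _).div hden (mul_ne_zero hx hx₁)
    |>.congr_deriv ?_
  simp only [derivPNi]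
  ring

lemma hasDerivAt_PNi_mul_comp_uNi {F F' : ℝ → ℝ} (hF : ∀ y, HasDerivAt F (F' y) y)
    (hx : x + N + k ≠ 0) (hx₁ : x + N + k - 1 ≠ 0) :
    HasDerivAt (fun y => PNi N (N + k) y * F (uNi N (N + k) y)) (termDeriv N k F F' x) x := by
  refine (hasDerivAt_PNi hx hx₁).mul ((hF _).comp x (hasDerivAt_uNi hx)) |>.congr_deriv ?_
  simp only [termDeriv, Function.comp_apply]; ring

lemma derivPNi_eq_sub (hx : x + N + k ≠ 0) (hx₁ : x + N + k - 1 ≠ 0) :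
    derivPNi N k x = k / (x + N + k - 1) ^ 2 - (k + 1) / (x + N + k) ^ 2 := by
  rw [derivPNi]
  field_simp
  ring

lemma V_eq_neg_tsum_Vsummand (N : ℕ) (g : ℝ → ℝ) (x : ℝ) :
    V N g x = -∑' k, Vsummand N g x k :=
  rfl

lemma Vsummand_eq (N k : ℕ) (g : ℝ → ℝ) (x : ℝ) :
    Vsummand N g x k = (k + 1) / (x + N + k) ^ 2
        * (∫ u in (uNi N (N + k) x)..(uNi N (N + k + 1) x), g u)
      + PNi N (N + k) x * derivUNi N k x * g (uNi N (N + k) x) := by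
  rw [Vsummand, PNi_add, derivUNi, div_mul_div_comm]
  push_cast
  ring

lemma Vsummand_eq_termDeriv_add {F F' : ℝ → ℝ} (hF : ∀ y, HasDerivAt F (F' y) y)
    (hF' : Continuous F') (hx : x + N + k ≠ 0) (hx₁ : x + N + k - 1 ≠ 0) :
    Vsummand N F' x k = termDeriv N k F F' x + (abelTerm N F x (k + 1) - abelTerm N F x k) := by
  rw [Vsummand_eq, intervalIntegral.integral_eq_sub_of_hasDerivAt (fun y _ => hF y)
      (hF'.intervalIntegrable _ _), termDeriv, derivPNi_eq_sub hx hx₁, abelTerm, abelTerm]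
  push_cast
  ring_nf

lemma V_const_mul (N : ℕ) (c : ℝ) (g : ℝ → ℝ) (x : ℝ) :
    V N (fun y => c * g y) x = c * V N g x := by
  rw [V_eq_neg_tsum_Vsummand, V_eq_neg_tsum_Vsummand, mul_neg, ← tsum_mul_left]
  refine congrArg _ (tsum_congr fun k => ?_)
  rw [Vsummand, Vsummand, intervalIntegral.integral_const_mul]
  ring

end Identities

section Bounds

variable {N k : ℕ} {x : ℝ}

lemma half_lt_add_sub_one (hN : 2 ≤ N) (hx : -1 / 2 < x) : 1 / 2 < x + N - 1 := by
  have : (2 : ℝ) ≤ N := by exact_mod_cast hN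
  linarith

lemma add_natCast_sub_one_pos (hN : 2 ≤ N) (hx : -1 / 2 < x) : 0 < x + N + k - 1 := by
  linarith [half_lt_add_sub_one hN hx, k.cast_nonneg (α := ℝ)]

lemma add_one_sq_le_two_mul (hN : 2 ≤ N) (hx : -1 / 2 < x) :
    ((k : ℝ) + 1) ^ 2 ≤ 2 * ((x + N + k) * (x + N + k - 1)) := by
  have ha := half_lt_add_sub_one hN hx
  have hk : (0 : ℝ) ≤ k := k.cast_nonneg
  have h : ((k : ℝ) + 3 / 2) * (k + 1 / 2) ≤ (x + N + k) * (x + N + k - 1) :=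
    mul_le_mul (by linarith) (by linarith) (by linarith) (by linarith)
  nlinarith

lemma uNi_mem_Icc (hN : 2 ≤ N) (hx : -1 / 2 < x) : uNi N (N + k) x ∈ Icc (-1 : ℝ) 1 := by
  have ha := half_lt_add_sub_one hN hx
  have hy : 0 < x + N + k := by linarith [add_natCast_sub_one_pos (k := k) hN hx]
  rw [uNi_add]
  constructor
  · have : N * (x + N + k)⁻¹ ≤ 2 := by
      rw [← div_eq_mul_inv, div_le_iff₀ hy]; linarith [k.cast_nonneg (α := ℝ)]
    linarith
  · have : 0 ≤ N * (x + N + k)⁻¹ := mul_nonneg N.cast_nonneg (inv_nonneg.2 hy.le)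
    linarith

lemma uNi_mem_Icc_zero_one (hN : 2 ≤ N) (hx : x ∈ Icc (0 : ℝ) 1) :
    uNi N (N + k) x ∈ Icc (0 : ℝ) 1 := by
  have hk : (0 : ℝ) ≤ k := k.cast_nonneg
  have hN' : (2 : ℝ) ≤ N := by exact_mod_cast hN
  have hy : 0 < x + N + k := by linarith [hx.1]
  rw [uNi_add]
  constructor
  · have : N * (x + N + k)⁻¹ ≤ 1 := by
      rw [← div_eq_mul_inv, div_le_one hy]; linarith [hx.1]
    linarith
  · have : 0 ≤ N * (x + N + k)⁻¹ := mul_nonneg N.cast_nonneg (inv_nonneg.2 hy.le)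
    linarith

lemma abs_derivPNi_le (hN : 2 ≤ N) (hx : -1 / 2 < x) :
    |derivPNi N k x| ≤ 2 / ((k : ℝ) + 1) ^ 2 := by
  have ha := half_lt_add_sub_one hN hx
  have hk : (0 : ℝ) ≤ k := k.cast_nonneg
  have hD := add_one_sq_le_two_mul (k := k) hN hx
  set D := (x + N + k) * (x + N + k - 1)
  have hDpos : 0 < D := by nlinarith
  -- both `k (k + 1)` and `(x + N - 1)²` lie in `[0, D]`
  have hnum : |(k : ℝ) * (k + 1) - (x + N - 1) ^ 2| ≤ D := by
    rw [abs_le]; constructor <;> nlinarith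
  rw [derivPNi, abs_div, abs_of_nonneg (sq_nonneg D),
    div_le_div_iff₀ (by positivity) (by positivity)]
  nlinarith

lemma PNi_nonneg (hN : 2 ≤ N) (hx : -1 / 2 < x) : 0 ≤ PNi N (N + k) x := by
  have hy₁ := add_natCast_sub_one_pos (k := k) hN hx
  rw [PNi_add]
  exact div_nonneg (by linarith [half_lt_add_sub_one hN hx]) (by nlinarith)

lemma PNi_le (hN : 2 ≤ N) (hx : -1 / 2 < x) :
    PNi N (N + k) x ≤ 2 * (x + N - 1) / ((k : ℝ) + 1) ^ 2 := by
  have ha := half_lt_add_sub_one hN hx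
  have hD := add_one_sq_le_two_mul (k := k) hN hx
  rw [PNi_add, div_le_div_iff₀ (by nlinarith) (by positivity)]
  nlinarith

lemma abs_PNi_mul_derivUNi_le (hN : 2 ≤ N) (hx : -1 / 2 < x) :
    |PNi N (N + k) x * derivUNi N k x| ≤ N / ((k : ℝ) + 1) ^ 2 := by
  have ha := half_lt_add_sub_one hN hx
  have hk : (0 : ℝ) ≤ k := k.cast_nonneg
  have hy₁ := add_natCast_sub_one_pos (k := k) hN hx
  have hy : 0 < x + N + k := by linarith
  rw [PNi_add, derivUNi, div_mul_div_comm, abs_of_nonneg (by positivity),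
    div_le_div_iff₀ (by positivity) (by positivity)]
  have h₁ : (x + N - 1) * ((k : ℝ) + 1) ^ 2 ≤ (x + N + k - 1) * (x + N + k) ^ 2 :=
    mul_le_mul (by linarith) (pow_le_pow_left₀ (by positivity) (by linarith) 2) (by positivity)
      hy₁.le
  have h₂ : (x + N + k - 1) * (x + N + k) ^ 2
      ≤ (x + N + k) * (x + N + k - 1) * (x + N + k) ^ 2 := by
    rw [mul_assoc]; exact le_mul_of_one_le_left (by positivity) (by linarith)
  nlinarith [mul_le_mul_of_nonneg_left (h₁.trans h₂) N.cast_nonneg]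

lemma abs_uNi_succ_sub_le (hN : 2 ≤ N) (hx : -1 / 2 < x) :
    |uNi N (N + k + 1) x - uNi N (N + k) x| ≤ N / ((k : ℝ) + 1) ^ 2 := by
  have ha := half_lt_add_sub_one hN hx
  have hk : (0 : ℝ) ≤ k := k.cast_nonneg
  have hy : 0 < x + N + k := by linarith
  have h : uNi N (N + k + 1) x - uNi N (N + k) x = N / ((x + N + k) * (x + N + k + 1)) := by
    rw [uNi_add, show N + k + 1 = N + (k + 1) from rfl, uNi_add]
    push_cast
    field_simp [hy.ne', show x + N + (k + 1) ≠ 0 by linarith]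
    ring
  rw [h, abs_of_nonneg (by positivity), div_le_div_iff₀ (by positivity) (by positivity)]
  gcongr
  nlinarith

end Bounds

section Series

variable {N k : ℕ} {x : ℝ} {F F' : ℝ → ℝ} {C₀ C₁ : ℝ}

lemma abs_termDeriv_le (hN : 2 ≤ N) (hx : -1 / 2 < x)
    (hC₀ : ∀ y ∈ Icc (-1 : ℝ) 1, |F y| ≤ C₀) (hC₁ : ∀ y ∈ Icc (-1 : ℝ) 1, |F' y| ≤ C₁) :
    |termDeriv N k F F' x| ≤ (2 * C₀ + N * C₁) / ((k : ℝ) + 1) ^ 2 := by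
  have hu := uNi_mem_Icc (k := k) hN hx
  calc |termDeriv N k F F' x|
      ≤ |derivPNi N k x| * |F (uNi N (N + k) x)|
        + |PNi N (N + k) x * derivUNi N k x| * |F' (uNi N (N + k) x)| := by
        rw [termDeriv, ← abs_mul, ← abs_mul]; exact abs_add_le _ _
    _ ≤ 2 / ((k : ℝ) + 1) ^ 2 * C₀ + N / ((k : ℝ) + 1) ^ 2 * C₁ := by
        gcongr
        · exact abs_derivPNi_le hN hx
        · exact hC₀ _ hu
        · exact abs_PNi_mul_derivUNi_le hN hx
        · exact hC₁ _ hu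
    _ = (2 * C₀ + N * C₁) / ((k : ℝ) + 1) ^ 2 := by ring

lemma abs_Vsummand_le (hN : 2 ≤ N) (hx : -1 / 2 < x)
    (hC₁ : ∀ y ∈ Icc (-1 : ℝ) 1, |F' y| ≤ C₁) :
    |Vsummand N F' x k| ≤ 2 * N * C₁ / ((k : ℝ) + 1) ^ 2 := by
  have ha := half_lt_add_sub_one hN hx
  have hk : (0 : ℝ) ≤ k := k.cast_nonneg
  have hu := uNi_mem_Icc (k := k) hN hx
  have hu' : uNi N (N + k + 1) x ∈ Icc (-1 : ℝ) 1 := uNi_mem_Icc (k := k + 1) hN hx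
  have hC₁0 : 0 ≤ C₁ := (abs_nonneg _).trans (hC₁ _ hu)
  have hcoef : |((k : ℝ) + 1) / (x + N + k) ^ 2| ≤ 1 := by
    rw [abs_of_nonneg (by positivity), div_le_one (by nlinarith)]; nlinarith
  have hint : |∫ u in (uNi N (N + k) x)..(uNi N (N + k + 1) x), F' u|
      ≤ C₁ * |uNi N (N + k + 1) x - uNi N (N + k) x| := by
    rw [← Real.norm_eq_abs]
    exact intervalIntegral.norm_integral_le_of_norm_le_const fun y hy =>
      hC₁ y (uIcc_subset_Icc hu hu' (uIoc_subset_uIcc hy))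
  calc |Vsummand N F' x k|
      ≤ |((k : ℝ) + 1) / (x + N + k) ^ 2|
          * |∫ u in (uNi N (N + k) x)..(uNi N (N + k + 1) x), F' u|
        + |PNi N (N + k) x * derivUNi N k x| * |F' (uNi N (N + k) x)| := by
        rw [Vsummand_eq, ← abs_mul, ← abs_mul]; exact abs_add_le _ _
    _ ≤ 1 * (C₁ * (N / ((k : ℝ) + 1) ^ 2)) + N / ((k : ℝ) + 1) ^ 2 * C₁ := by
        gcongr
        · exact hint.trans (by gcongr; exact abs_uNi_succ_sub_le hN hx)
        · exact abs_PNi_mul_derivUNi_le hN hx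
        · exact hC₁ _ hu
    _ = 2 * N * C₁ / ((k : ℝ) + 1) ^ 2 := by ring

lemma tendsto_abelTerm (hN : 2 ≤ N) (hx : -1 / 2 < x)
    (hC₀ : ∀ y ∈ Icc (-1 : ℝ) 1, |F y| ≤ C₀) :
    Tendsto (abelTerm N F x) atTop (𝓝 0) := by
  have ha := half_lt_add_sub_one hN hx
  have hC₀0 : 0 ≤ C₀ := (abs_nonneg _).trans (hC₀ _ (uNi_mem_Icc (k := 0) hN hx))
  have hlim : Tendsto (fun k : ℕ => 2 * C₀ * (1 / ((k : ℝ) + 1))) atTop (𝓝 0) := by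
    simpa using tendsto_one_div_add_atTop_nhds_zero_nat.const_mul (2 * C₀)
  refine squeeze_zero_norm (fun k => ?_) hlim
  have hk : (0 : ℝ) ≤ k := k.cast_nonneg
  have hcoef : (k : ℝ) / (x + N + k - 1) ^ 2 ≤ 2 * (1 / ((k : ℝ) + 1)) := by
    rw [div_le_iff₀ (by nlinarith), mul_one_div, div_mul_eq_mul_div, le_div_iff₀ (by positivity)]
    nlinarith
  rw [abelTerm, Real.norm_eq_abs, abs_mul, abs_of_nonneg (by positivity)]
  calc (k : ℝ) / (x + N + k - 1) ^ 2 * |F (uNi N (N + k) x)| ≤ 2 * (1 / ((k : ℝ) + 1)) * C₀ :=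
        mul_le_mul hcoef (hC₀ _ (uNi_mem_Icc hN hx)) (abs_nonneg _) (by positivity)
    _ = 2 * C₀ * (1 / ((k : ℝ) + 1)) := by ring

lemma V_eq_neg_tsum_termDeriv (hN : 2 ≤ N) (hx : -1 / 2 < x)
    (hF : ∀ y, HasDerivAt F (F' y) y) (hF' : Continuous F')
    (hC₀ : ∀ y ∈ Icc (-1 : ℝ) 1, |F y| ≤ C₀) (hC₁ : ∀ y ∈ Icc (-1 : ℝ) 1, |F' y| ≤ C₁) :
    V N F' x = -∑' k, termDeriv N k F F' x := by
  have hD : Summable fun k => termDeriv N k F F' x :=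
    .of_norm_bounded (summable_div_add_one_sq _) fun k => abs_termDeriv_le hN hx hC₀ hC₁
  have hV : Summable (Vsummand N F' x) :=
    .of_norm_bounded (summable_div_add_one_sq _) fun k => abs_Vsummand_le hN hx hC₁
  have hsum : ∀ k, Vsummand N F' x k = _ := fun k =>
    have hy₁ := add_natCast_sub_one_pos (k := k) hN hx
    Vsummand_eq_termDeriv_add hF hF' (by linarith) hy₁.ne'
  have hA : Summable fun k => abelTerm N F x (k + 1) - abelTerm N F x k :=
    (hV.sub hD).congr fun k => by rw [hsum]; ring
  rw [V_eq_neg_tsum_Vsummand, tsum_congr hsum, hD.tsum_add hA,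
    tsum_sub_eq_of_tendsto hA (tendsto_abelTerm hN hx hC₀)]
  simp [abelTerm]

lemma hasDerivAt_U_tsum_termDeriv (hN : 2 ≤ N) (hx : -1 / 2 < x)
    (hF : ∀ y, HasDerivAt F (F' y) y)
    (hC₀ : ∀ y ∈ Icc (-1 : ℝ) 1, |F y| ≤ C₀) (hC₁ : ∀ y ∈ Icc (-1 : ℝ) 1, |F' y| ≤ C₁) :
    HasDerivAt (U N F) (∑' k, termDeriv N k F F' x) x := by
  have h0 : -1 / 2 < (0 : ℝ) := by norm_num
  have hsummable : Summable fun k => PNi N (N + k) 0 * F (uNi N (N + k) 0) := by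
    refine .of_norm_bounded (summable_div_add_one_sq (2 * (N - 1) * C₀)) fun k => ?_
    rw [Real.norm_eq_abs, abs_mul, abs_of_nonneg (PNi_nonneg hN h0)]
    calc PNi N (N + k) 0 * |F (uNi N (N + k) 0)|
        ≤ 2 * (0 + N - 1) / ((k : ℝ) + 1) ^ 2 * C₀ :=
          mul_le_mul (PNi_le hN h0) (hC₀ _ (uNi_mem_Icc hN h0)) (abs_nonneg _)
            (div_nonneg (by linarith [half_lt_add_sub_one hN h0]) (sq_nonneg _))
      _ = 2 * (N - 1) * C₀ / ((k : ℝ) + 1) ^ 2 := by ring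
  refine hasDerivAt_tsum_of_isPreconnected (summable_div_add_one_sq _) isOpen_Ioi
    isPreconnected_Ioi (fun k y hy => ?_) (fun k y hy => abs_termDeriv_le hN hy hC₀ hC₁)
    (show (0 : ℝ) ∈ Ioi (-1 / 2) from h0) hsummable hx
  have hy₁ := add_natCast_sub_one_pos (k := k) hN hy
  exact hasDerivAt_PNi_mul_comp_uNi hF (by linarith) hy₁.ne'

lemma continuousOn_termDeriv (hN : 2 ≤ N) (hF : ∀ y, HasDerivAt F (F' y) y)
    (hF' : Continuous F') (k : ℕ) : ContinuousOn (termDeriv N k F F') (Ioi (-1 / 2)) := by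
  intro x hx
  have hy₁ := add_natCast_sub_one_pos (k := k) hN hx
  have hu := (hasDerivAt_uNi (N := N) (k := k) (x := x) (by linarith)).continuousAt
  have hP := (hasDerivAt_PNi (N := N) (k := k) (x := x) (by linarith) hy₁.ne').continuousAt
  have hdP : ContinuousAt (derivPNi N k) x :=
    ContinuousAt.div (by fun_prop) (by fun_prop) (pow_ne_zero 2 (mul_pos (by linarith) hy₁).ne')
  have hdU : ContinuousAt (derivUNi N k) x :=
    ContinuousAt.div (by fun_prop) (by fun_prop) (pow_ne_zero 2 (by linarith))
  have hFu : ContinuousAt (fun y => F (uNi N (N + k) y)) x := (hF _).continuousAt.comp hu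
  have hF'u : ContinuousAt (fun y => F' (uNi N (N + k) y)) x := hF'.continuousAt.comp hu
  exact ((hdP.mul hFu).add ((hP.mul hdU).mul hF'u)).continuousWithinAt

theorem hasDerivAt_U_neg_V (hN : 2 ≤ N) (hF : ∀ y, HasDerivAt F (F' y) y)
    (hF' : Continuous F') (hx : -1 / 2 < x) : HasDerivAt (U N F) (-V N F' x) x := by
  obtain ⟨C₀, hC₀⟩ := (isCompact_Icc (a := (-1 : ℝ)) (b := 1)).exists_bound_of_continuousOn
    (continuous_iff_continuousAt.2 fun y => (hF y).continuousAt).continuousOn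
  obtain ⟨C₁, hC₁⟩ := (isCompact_Icc (a := (-1 : ℝ)) (b := 1)).exists_bound_of_continuousOn
    hF'.continuousOn
  rw [V_eq_neg_tsum_termDeriv hN hx hF hF' hC₀ hC₁, neg_neg]
  exact hasDerivAt_U_tsum_termDeriv hN hx hF hC₀ hC₁

theorem continuousOn_V (hN : 2 ≤ N) {g : ℝ → ℝ} (hg : Continuous g) :
    ContinuousOn (V N g) (Ioi (-1 / 2)) := by
  have hF : ∀ y, HasDerivAt (fun x => ∫ t in (0 : ℝ)..x, g t) (g y) y := fun y =>
    (hg.integral_hasStrictDerivAt 0 y).hasDerivAt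
  obtain ⟨C₀, hC₀⟩ := (isCompact_Icc (a := (-1 : ℝ)) (b := 1)).exists_bound_of_continuousOn
    (continuous_iff_continuousAt.2 fun y => (hF y).continuousAt).continuousOn
  obtain ⟨C₁, hC₁⟩ := (isCompact_Icc (a := (-1 : ℝ)) (b := 1)).exists_bound_of_continuousOn
    hg.continuousOn
  refine (continuousOn_tsum (continuousOn_termDeriv hN hF hg) (summable_div_add_one_sq _)
    fun k x hx => abs_termDeriv_le hN hx hC₀ hC₁).neg.congr fun x hx => ?_
  exact V_eq_neg_tsum_termDeriv hN hx hF hg hC₀ hC₁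

end Series

section UnitInterval

variable {N : ℕ} {x : ℝ}

lemma U_congr (hN : 2 ≤ N) {f g : ℝ → ℝ} (hfg : EqOn f g (Icc 0 1)) (hx : x ∈ Icc (0 : ℝ) 1) :
    U N f x = U N g x :=
  tsum_congr fun _ => by rw [hfg (uNi_mem_Icc_zero_one hN hx)]

lemma V_congr (hN : 2 ≤ N) {f g : ℝ → ℝ} (hfg : EqOn f g (Icc 0 1)) (hx : x ∈ Icc (0 : ℝ) 1) :
    V N f x = V N g x := by
  have hu (k : ℕ) : uNi N (N + k) x ∈ Icc 0 1 := uNi_mem_Icc_zero_one hN hx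
  rw [V_eq_neg_tsum_Vsummand, V_eq_neg_tsum_Vsummand]
  refine congrArg _ (tsum_congr fun k => ?_)
  have hu' : uNi N (N + k + 1) x ∈ Icc 0 1 := hu (k + 1)
  rw [Vsummand, Vsummand, hfg (hu k), intervalIntegral.integral_congr fun t ht =>
    hfg (uIcc_subset_Icc (hu k) hu' ht)]

theorem hasDerivWithinAt_U (hN : 2 ≤ N) {f f' : ℝ → ℝ}
    (hf : ∀ x ∈ Icc 0 1, HasDerivWithinAt f (f' x) (Icc 0 1) x) (hf' : ContinuousOn f' (Icc 0 1))
    (hx : x ∈ Icc (0 : ℝ) 1) : HasDerivWithinAt (U N f) (-V N f' x) (Icc 0 1) x := by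
  obtain ⟨F, F', hF, hF', hFf, hF'f⟩ := exists_hasDerivAt_eqOn_Icc zero_le_one hf hf'
  rw [← V_congr hN hF'f hx]
  exact (hasDerivAt_U_neg_V hN hF hF' (by linarith [hx.1])).hasDerivWithinAt.congr
    (fun y hy => (U_congr hN hFf hy).symm) (U_congr hN hFf hx).symm

theorem continuousOn_V_Icc (hN : 2 ≤ N) {g : ℝ → ℝ} (hg : ContinuousOn g (Icc 0 1)) :
    ContinuousOn (V N g) (Icc 0 1) := by
  have hG : Continuous (IccExtend zero_le_one ((Icc 0 1).domRestrict g)) :=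
    continuous_IccExtend_iff.2 hg.domRestrict
  refine ((continuousOn_V hN hG).mono fun y hy => ?_).congr fun y hy => ?_
  · exact show (-1 / 2 : ℝ) < y by linarith [hy.1]
  · exact (V_congr hN (fun z hz => IccExtend_of_mem _ _ hz) hy).symm

end UnitInterval

theorem stmt9_general (N : ℕ) (hN : 2 ≤ N) (f f' : ℝ → ℝ)
    (hderiv : ∀ x ∈ Set.Icc (0:ℝ) 1, HasDerivWithinAt f (f' x) (Set.Icc (0:ℝ) 1) x)
    (hcont : ContinuousOn f' (Set.Icc (0:ℝ) 1))
    (n : ℕ) :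
    ∀ x ∈ Set.Icc (0:ℝ) 1,
      HasDerivWithinAt ((U N)^[n] f) ((-1 : ℝ) ^ n * (V N)^[n] f' x)
        (Set.Icc (0:ℝ) 1) x := by
  suffices h : (∀ x ∈ Icc (0 : ℝ) 1,
      HasDerivWithinAt ((U N)^[n] f) ((-1 : ℝ) ^ n * (V N)^[n] f' x) (Icc 0 1) x) ∧
      ContinuousOn (fun x => (-1 : ℝ) ^ n * (V N)^[n] f' x) (Icc 0 1) from h.1
  induction n with
  | zero =>
    simp only [Function.iterate_zero, id, pow_zero, one_mul]
    exact ⟨hderiv, hcont⟩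
  | succ n ih =>
    have hV : ∀ x, -V N (fun y => (-1 : ℝ) ^ n * (V N)^[n] f' y) x
        = (-1 : ℝ) ^ (n + 1) * (V N)^[n + 1] f' x := fun x => by
      rw [V_const_mul, Function.iterate_succ_apply']; ring
    refine ⟨fun x hx => ?_, (continuousOn_V_Icc hN ih.2).neg.congr fun x _ => (hV x).symm⟩
    rw [Function.iterate_succ_apply', ← hV]
    exact hasDerivWithinAt_U hN ih.1 ih.2 hx

theorem stmt9 (N : ℕ) (hN : 2 ≤ N) (f f' : ℝ → ℝ)
    (hderiv : ∀ x ∈ Set.Icc (0:ℝ) 1, HasDerivWithinAt f (f' x) (Set.Icc (0:ℝ) 1) x)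
    (hcont : ContinuousOn f' (Set.Icc (0:ℝ) 1))
    (n : ℕ) (hn : 1 ≤ n) :
    ∀ x ∈ Set.Icc (0:ℝ) 1,
      HasDerivWithinAt ((U N)^[n] f) ((-1 : ℝ) ^ n * (V N)^[n] f' x)
        (Set.Icc (0:ℝ) 1) x :=
  stmt9_general N hN f f' hderiv hcont n
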